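/- arXiv:2006.12484 — 6 statements merged into one kernel-verified Lean document; each statement's English description precedes it below -/
import Mathlib

section
/- Let θ = (𝕋, 𝕆, μ₁) be a POMDP parameter triple such that every observation matrix 𝕆_h has full column rank (equivalently 𝕆_h^† 𝕆_h = I_S). Then for every 1 ≤ h ≤ H, every action sequence a₁, …, a_{h−1} ∈ 𝒜 and every observation sequence o₁, …, o_h ∈ 𝒪, one has e_{o_h}^⊤ · B_{h−1}(a_{h−1}, o_{h−1}; θ) ⋯ B₁(a₁, o₁; θ) · b₀(θ) = Pr_θ(o_h, …, o₁ | a_{h−1}, …, a₁), i.e. the product of observable operators computes the conditional probability of the observation sequence given the action sequence. -/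
open Matrix BigOperators
open scoped Classical

noncomputable section

/-- The entrywise ℓ¹-norm of a finite vector. -/
def l1norm {n : ℕ} (v : Fin n → ℝ) : ℝ := ∑ i, |v i|

/-- The Euclidean (ℓ²) norm of a finite vector. -/
def l2norm {n : ℕ} (v : Fin n → ℝ) : ℝ := Real.sqrt (∑ i, (v i) ^ 2)

/-- The smallest singular value of a matrix, i.e. the infimum of `‖M x‖₂`
over unit vectors `x`. -/
def sigmaMin {m n : ℕ} (M : Matrix (Fin m) (Fin n) ℝ) : ℝ :=
  sInf {r : ℝ | ∃ x : Fin n → ℝ, l2norm x = 1 ∧ r = l2norm (M.mulVec x)}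

/-- The Moore–Penrose pseudoinverse of a full-column-rank matrix:
`M† = (Mᵀ M)⁻¹ Mᵀ`. -/
def pinvFC {m n : ℕ} (M : Matrix (Fin m) (Fin n) ℝ) : Matrix (Fin n) (Fin m) ℝ :=
  (Mᵀ * M)⁻¹ * Mᵀ

/-- A POMDP parameter triple `θ = (𝕋, 𝕆, μ₁)`: column-stochastic transition
matrices `𝕋_h(a) ∈ ℝ^{S×S}` (entry `(s', s)` is `𝕋_h(s'|s,a)`), observation
matrices `𝕆_h ∈ ℝ^{O×S}` with probability-vector columns, and an initial
distribution `μ₁ ∈ ℝ^S`.  Steps are indexed by `ℕ` (1-based). -/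
structure POMDPParams (S A O : ℕ) where
  T : ℕ → Fin A → Matrix (Fin S) (Fin S) ℝ
  Ob : ℕ → Matrix (Fin O) (Fin S) ℝ
  mu1 : Fin S → ℝ
  T_nonneg : ∀ h a s' s, 0 ≤ T h a s' s
  T_colsum : ∀ h a s, ∑ s', T h a s' s = 1
  Ob_nonneg : ∀ h o s, 0 ≤ Ob h o s
  Ob_colsum : ∀ h s, ∑ o, Ob h o s = 1
  mu1_nonneg : ∀ s, 0 ≤ mu1 s
  mu1_sum : ∑ s, mu1 s = 1

namespace POMDPParams

variable {S A O : ℕ}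

/-- The observable operator `B_h(a, o; θ) = 𝕆_{h+1} 𝕋_h(a) diag(𝕆_h(o|·)) 𝕆_h†`. -/
def Bop (θ : POMDPParams S A O) (h : ℕ) (a : Fin A) (o : Fin O) :
    Matrix (Fin O) (Fin O) ℝ :=
  θ.Ob (h + 1) * θ.T h a * Matrix.diagonal (fun s => θ.Ob h o s) * pinvFC (θ.Ob h)

/-- The initial observable-operator vector `b₀(θ) = 𝕆₁ μ₁`. -/
def bvec0 (θ : POMDPParams S A O) : Fin O → ℝ := (θ.Ob 1).mulVec θ.mu1

/-- A length-`h` trajectory `τ_h = (a_h, o_h, …, a₁, o₁)` is encoded as a map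
`Fin h → Fin A × Fin O`, index `i` holding the pair `(a_{i+1}, o_{i+1})`. -/
abbrev Traj (A O h : ℕ) := Fin h → Fin A × Fin O

/-- The unnormalized belief
`b(τ_h; θ) = B_h(a_h, o_h; θ) ⋯ B₁(a₁, o₁; θ) b₀(θ)`. -/
def belief (θ : POMDPParams S A O) : (h : ℕ) → Traj A O h → Fin O → ℝ
  | 0, _ => θ.bvec0
  | h + 1, τ =>
      (θ.Bop (h + 1) (τ (Fin.last h)).1 (τ (Fin.last h)).2).mulVec
        (θ.belief h (fun i : Fin h => τ i.castSucc))

/-- `stateBelief θ h τ s = Pr_θ(o_h, …, o₁, s_{h+1} = s | a_h, …, a₁)`, the joint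
probability of the observations of `τ` together with reaching state `s` at step
`h+1`, given the actions of `τ`. -/
def stateBelief (θ : POMDPParams S A O) : (h : ℕ) → Traj A O h → Fin S → ℝ
  | 0, _ => θ.mu1
  | h + 1, τ =>
      (θ.T (h + 1) (τ (Fin.last h)).1).mulVec
        (fun s => θ.Ob (h + 1) (τ (Fin.last h)).2 s *
          θ.stateBelief h (fun i : Fin h => τ i.castSucc) s)

/-- The conditional trajectory probability
`p(τ_h; θ) = Pr_θ(o_h, …, o₁ | a_{h−1}, …, a₁)`
(the last action of `τ_h` is irrelevant). -/
def trajProb (θ : POMDPParams S A O) : (h : ℕ) → Traj A O h → ℝ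
  | 0, _ => 1
  | h + 1, τ =>
      ∑ s, θ.Ob (h + 1) (τ (Fin.last h)).2 s *
        θ.stateBelief h (fun i : Fin h => τ i.castSucc) s

end POMDPParams

/-- A deterministic policy: given the length-`n` past history (most recent pair
first corresponds to index `n-1`) and the current observation, produce the
action for step `n+1`. -/
def Policy (A O : ℕ) := ∀ n : ℕ, (Fin n → Fin A × Fin O) → Fin O → Fin A

/-- A trajectory is admissible for `π` (i.e. lies in `Γ(π, h)`) if each of its
actions is the one `π` assigns to the preceding history. -/
def IsAdm {A O : ℕ} (π : Policy A O) {h : ℕ} (τ : POMDPParams.Traj A O h) : Prop :=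
  ∀ j : Fin h, (τ j).1 = π j.val (fun i : Fin j.val => τ (Fin.castLE j.isLt.le i)) (τ j).2

/-- `Γ(π, h)`: the finite set of length-`h` trajectories admissible for `π`. -/
noncomputable def GammaF {A O : ℕ} (π : Policy A O) (h : ℕ) :
    Finset (POMDPParams.Traj A O h) :=
  Finset.univ.filter (fun τ => IsAdm π τ)

/-- The state visitation probability `Pr^π_θ(s_h = s)` (for `h ≥ 1`). -/
noncomputable def visitProb {S A O : ℕ} (θ : POMDPParams S A O) (π : Policy A O)
    (h : ℕ) (s : Fin S) : ℝ :=
  ∑ τ ∈ GammaF π (h - 1), θ.stateBelief (h - 1) τ s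

/-- The trajectory induced by a deterministic policy `π` on an observation
sequence: actions are filled in by `π`. -/
def trajOf {A O : ℕ} (π : Policy A O) : (h : ℕ) → (Fin h → Fin O) → POMDPParams.Traj A O h
  | 0, _ => Fin.elim0
  | h + 1, ω =>
      Fin.snoc (trajOf π h (fun i : Fin h => ω i.castSucc))
        (π h (trajOf π h (fun i : Fin h => ω i.castSucc)) (ω (Fin.last h)), ω (Fin.last h))

end
theorem belief_eq_Ob_mulVec_stateBelief {S A O : ℕ} (θ : POMDPParams S A O)
    (hfc : ∀ h : ℕ, pinvFC (θ.Ob h) * θ.Ob h = 1) :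
    ∀ (h : ℕ) (τ : POMDPParams.Traj A O h),
      θ.belief h τ = (θ.Ob (h + 1)).mulVec (θ.stateBelief h τ) := by
  intro h
  induction h with
  | zero => intro τ; rfl
  | succ h ih =>
      intro τ
      have hIH := ih (fun i : Fin h => τ i.castSucc)
      show (θ.Bop (h + 1) (τ (Fin.last h)).1 (τ (Fin.last h)).2).mulVec
          (θ.belief h (fun i : Fin h => τ i.castSucc)) = _
      rw [hIH, Matrix.mulVec_mulVec, POMDPParams.Bop, Matrix.mul_assoc _ (pinvFC (θ.Ob (h + 1))) (θ.Ob (h + 1)), hfc, Matrix.mul_one]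
      have hdiag : (Matrix.diagonal (fun s => θ.Ob (h + 1) (τ (Fin.last h)).2 s)).mulVec
          (θ.stateBelief h (fun i : Fin h => τ i.castSucc))
          = fun s => θ.Ob (h + 1) (τ (Fin.last h)).2 s *
            θ.stateBelief h (fun i : Fin h => τ i.castSucc) s := by
        funext s; simp [Matrix.mulVec_diagonal]
      rw [← Matrix.mulVec_mulVec, ← Matrix.mulVec_mulVec, hdiag]
      rfl

/-- If every observation matrix of `θ` has full column rank
(`𝕆_h† 𝕆_h = I_S`), then for every trajectory the product of observable
operators computes the conditional probability of the observations given the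
actions:
`e_{o_h}ᵀ B_{h−1}(a_{h−1}, o_{h−1}; θ) ⋯ B₁(a₁, o₁; θ) b₀(θ)
  = Pr_θ(o_h, …, o₁ | a_{h−1}, …, a₁)`. -/
theorem operator_product_eq_condProb {S A O : ℕ} (θ : POMDPParams S A O)
    (hfc : ∀ h : ℕ, pinvFC (θ.Ob h) * θ.Ob h = 1)
    (h : ℕ) (τ : POMDPParams.Traj A O (h + 1)) :
    θ.belief h (fun i : Fin h => τ i.castSucc) (τ (Fin.last h)).2
      = θ.trajProb (h + 1) τ := by
  rw [belief_eq_Ob_mulVec_stateBelief θ hfc]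
  simp [Matrix.mulVec, dotProduct, POMDPParams.trajProb]
end

section
/- Let θ = (𝕋, 𝕆, μ₁) be a POMDP parameter triple, let μ ∈ ℝ^S be any probability vector, let 2 ≤ h ≤ H−1, a, ã ∈ 𝒜 and o ∈ 𝒪. (i) If 𝕆_h^† 𝕆_h = I_S, then B_h(a, o; θ) · (𝕆_h 𝕋_{h−1}(ã) diag(μ) 𝕆_{h−1}^⊤) = 𝕆_{h+1} 𝕋_h(a) diag(𝕆_h(o|·)) 𝕋_{h−1}(ã) diag(μ) 𝕆_{h−1}^⊤. (ii) If 𝕆_{h−1}^† 𝕆_{h−1} = I_S, then B_{h−1}(ã, o; θ) · (𝕆_{h−1} μ) = (𝕆_h 𝕋_{h−1}(ã) diag(μ) 𝕆_{h−1}^⊤) e_o, i.e. it equals the o-th column of 𝕆_h 𝕋_{h−1}(ã) diag(μ) 𝕆_{h−1}^⊤. (In words: the true observable operators map the one- and two-observation moment matrices to the corresponding higher moment matrices.) -/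
open Matrix BigOperators
open scoped Classical

/-- The true observable operators map the one- and
two-observation moment matrices to the corresponding higher moment matrices. -/
theorem Bop_moment_equations {S A O : ℕ} (θ : POMDPParams S A O)
    (μ : Fin S → ℝ) (hμ0 : ∀ s, 0 ≤ μ s) (hμ1 : ∑ s, μ s = 1)
    (h : ℕ) (hh : 2 ≤ h) (a a' : Fin A) (o : Fin O) :
    (pinvFC (θ.Ob h) * θ.Ob h = 1 →
      θ.Bop h a o * (θ.Ob h * θ.T (h - 1) a' * Matrix.diagonal μ * (θ.Ob (h - 1))ᵀ)
        = θ.Ob (h + 1) * θ.T h a * Matrix.diagonal (fun s => θ.Ob h o s) *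
            θ.T (h - 1) a' * Matrix.diagonal μ * (θ.Ob (h - 1))ᵀ)
    ∧ (pinvFC (θ.Ob (h - 1)) * θ.Ob (h - 1) = 1 →
      (θ.Bop (h - 1) a' o).mulVec ((θ.Ob (h - 1)).mulVec μ)
        = fun i => (θ.Ob h * θ.T (h - 1) a' * Matrix.diagonal μ * (θ.Ob (h - 1))ᵀ) i o) := by
  constructor
  · intro hp
    unfold POMDPParams.Bop
    simp only [Matrix.mul_assoc]
    rw [← Matrix.mul_assoc (pinvFC (θ.Ob h)) (θ.Ob h), hp, Matrix.one_mul]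
  · intro hp
    have hps : h - 1 + 1 = h := by omega
    unfold POMDPParams.Bop
    rw [hps, Matrix.mulVec_mulVec]
    simp only [Matrix.mul_assoc]
    rw [hp, Matrix.mul_one]
    funext i
    simp only [Matrix.mulVec, Matrix.mul_apply, Matrix.diagonal_apply, dotProduct,
      Matrix.transpose_apply, Finset.sum_mul, Finset.mul_sum, ite_mul, mul_ite,
      zero_mul, mul_zero, Finset.sum_ite_eq, Finset.sum_ite_eq', Finset.mem_univ,
      if_true]
    rw [Finset.sum_comm]
    apply Finset.sum_congr rfl
    intro s _
    apply Finset.sum_congr rfl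
    intro t _
    ring
end

section
/- Let θ = (𝕋, 𝕆, μ₁) and θ̂ = (𝕋̂, 𝕆̂, μ̂₁) be two POMDP parameter triples such that every 𝕆̂_h ∈ ℝ^{O×S} has full column rank (so 𝕆̂_h^† 𝕆̂_h = I_S). Let π be a deterministic policy and h ≥ 1. Then for each choice X ∈ {I_O, 𝕆̂_{h+1}^†}: Σ_{τ_h ∈ Γ(π,h)} ‖X (b(τ_h; θ) − b(τ_h; θ̂))‖₁ ≤ Σ_{τ_{h−1} ∈ Γ(π,h−1)} ‖𝕆̂_h^† (b(τ_{h−1}; θ) − b(τ_{h−1}; θ̂))‖₁ + Σ_{τ_h ∈ Γ(π,h)} ‖X (B_h(a_h, o_h; θ̂) − B_h(a_h, o_h; θ)) b(τ_{h−1}; θ)‖₁, where for τ_h = (a_h, o_h, τ_{h−1}) the trajectory τ_{h−1} denotes its length-(h−1) prefix. -/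
open Matrix BigOperators
open scoped Classical

section Helpers

open POMDPParams

lemma l1norm_neg' {n : ℕ} (v : Fin n → ℝ) : l1norm (-v) = l1norm v := by
  unfold l1norm; simp

lemma l1norm_add_le' {n : ℕ} (u v : Fin n → ℝ) :
    l1norm (u + v) ≤ l1norm u + l1norm v := by
  unfold l1norm
  rw [← Finset.sum_add_distrib]
  exact Finset.sum_le_sum fun i _ => abs_add_le _ _

lemma l1norm_mulVec_colstoch {m n : ℕ} (M : Matrix (Fin m) (Fin n) ℝ)
    (hM : ∀ i j, 0 ≤ M i j) (hc : ∀ j, ∑ i, M i j = 1) (v : Fin n → ℝ) :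
    l1norm (M.mulVec v) ≤ l1norm v := by
  unfold l1norm
  simp only [Matrix.mulVec, dotProduct]
  calc ∑ i, |∑ j, M i j * v j| ≤ ∑ i, ∑ j, M i j * |v j| := by
        refine Finset.sum_le_sum fun i _ => ?_
        refine (Finset.abs_sum_le_sum_abs _ _).trans ?_
        refine Finset.sum_le_sum fun j _ => ?_
        rw [abs_mul, abs_of_nonneg (hM i j)]
    _ = ∑ j, (∑ i, M i j) * |v j| := by
        rw [Finset.sum_comm]; simp [Finset.sum_mul]
    _ = ∑ j, |v j| := by simp [hc]

lemma snoc_prefix' {α : Type*} {h : ℕ} (τ' : Fin h → α) (p : α) :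
    (fun i : Fin h => (Fin.snoc τ' p : Fin (h+1) → α) i.castSucc) = τ' :=
  funext fun i => Fin.snoc_castSucc _ _ _

lemma isAdm_prefix {A O h : ℕ} (π : Policy A O) (τ : Traj A O (h+1))
    (hτ : IsAdm π τ) : IsAdm π (fun i : Fin h => τ i.castSucc) := by
  intro j
  exact hτ j.castSucc

lemma isAdm_snoc {A O h : ℕ} (π : Policy A O) (τ' : Traj A O h)
    (hτ : IsAdm π τ') (o : Fin O) :
    IsAdm π (Fin.snoc τ' (π h τ' o, o) : Traj A O (h+1)) := by
  intro j
  induction j using Fin.lastCases with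
  | last =>
      have hpref : (fun i : Fin (Fin.last h).val =>
          (Fin.snoc τ' (π h τ' o, o) : Traj A O (h+1)) (Fin.castLE (Fin.last h).isLt.le i))
            = τ' := by
        funext i
        have e : Fin.castLE (Fin.last h).isLt.le i = Fin.castSucc i := rfl
        rw [e, Fin.snoc_castSucc]
      show ((Fin.snoc τ' (π h τ' o, o) : Traj A O (h+1)) (Fin.last h)).1 = _
      rw [Fin.snoc_last, hpref]
      rfl
  | cast k =>
      have e1 : (Fin.snoc τ' (π h τ' o, o) : Traj A O (h+1)) k.castSucc = τ' k :=
        Fin.snoc_castSucc _ _ _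
      have e2 : (fun i : Fin (k.castSucc).val =>
          (Fin.snoc τ' (π h τ' o, o) : Traj A O (h+1)) (Fin.castLE (k.castSucc).isLt.le i))
            = (fun i : Fin k.val => τ' (Fin.castLE k.isLt.le i)) := by
        funext i
        have e : Fin.castLE (k.castSucc).isLt.le i = (Fin.castLE k.isLt.le i).castSucc := rfl
        rw [e, Fin.snoc_castSucc]
      show ((Fin.snoc τ' (π h τ' o, o) : Traj A O (h+1)) k.castSucc).1 = _
      rw [e1, e2]
      exact hτ k

lemma snoc_of_adm {A O h : ℕ} (π : Policy A O) (τ : Traj A O (h+1)) (hτ : IsAdm π τ) :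
    (Fin.snoc (fun i : Fin h => τ i.castSucc)
        (π h (fun i : Fin h => τ i.castSucc) (τ (Fin.last h)).2, (τ (Fin.last h)).2)
      : Traj A O (h+1)) = τ := by
  funext i
  induction i using Fin.lastCases with
  | last =>
      rw [Fin.snoc_last]
      exact Prod.ext_iff.mpr ⟨(hτ (Fin.last h)).symm, rfl⟩
  | cast k => rw [Fin.snoc_castSucc]

lemma mem_gammaF_iff {A O h : ℕ} (π : Policy A O) (τ : Traj A O h) :
    τ ∈ GammaF π h ↔ IsAdm π τ := by
  simp [GammaF]

lemma sum_gamma_succ {A O h : ℕ} (π : Policy A O) (f : Traj A O (h+1) → ℝ) :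
    ∑ τ ∈ GammaF π (h+1), f τ
      = ∑ τ' ∈ GammaF π h, ∑ o : Fin O, f (Fin.snoc τ' (π h τ' o, o)) := by
  rw [← Finset.sum_product']
  refine Finset.sum_bij'
    (fun τ _ => ((fun i : Fin h => τ i.castSucc), (τ (Fin.last h)).2))
    (fun p _ => (Fin.snoc p.1 (π h p.1 p.2, p.2) : Traj A O (h+1)))
    ?_ ?_ ?_ ?_ ?_
  · intro τ hτ
    rw [Finset.mem_product]
    exact ⟨(mem_gammaF_iff _ _).mpr (isAdm_prefix π τ ((mem_gammaF_iff _ _).mp hτ)),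
      Finset.mem_univ _⟩
  · rintro ⟨τ', o⟩ hp
    rw [Finset.mem_product] at hp
    exact (mem_gammaF_iff _ _).mpr (isAdm_snoc π τ' ((mem_gammaF_iff _ _).mp hp.1) o)
  · intro τ hτ
    exact snoc_of_adm π τ ((mem_gammaF_iff _ _).mp hτ)
  · rintro ⟨τ', o⟩ -
    simp only [Prod.mk.injEq, Fin.snoc_last]
    exact ⟨snoc_prefix' τ' _, trivial⟩
  · intro τ hτ
    exact (congrArg f (snoc_of_adm π τ ((mem_gammaF_iff _ _).mp hτ))).symm

lemma sum_obs_bound {S A O : ℕ} (θh : POMDPParams S A O) (j : ℕ)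
    (a : Fin O → Fin A) (w : Fin S → ℝ) :
    ∑ o : Fin O, l1norm ((θh.T j (a o)).mulVec (fun s => θh.Ob j o s * w s))
      ≤ l1norm w := by
  calc ∑ o : Fin O, l1norm ((θh.T j (a o)).mulVec (fun s => θh.Ob j o s * w s))
      ≤ ∑ o : Fin O, l1norm (fun s => θh.Ob j o s * w s) :=
        Finset.sum_le_sum fun o _ =>
          l1norm_mulVec_colstoch _ (θh.T_nonneg j (a o)) (θh.T_colsum j (a o)) _
    _ = ∑ o : Fin O, ∑ s, θh.Ob j o s * |w s| := by
        refine Finset.sum_congr rfl fun o _ => ?_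
        unfold l1norm
        refine Finset.sum_congr rfl fun s _ => ?_
        rw [abs_mul, abs_of_nonneg (θh.Ob_nonneg j o s)]
    _ = ∑ s, (∑ o, θh.Ob j o s) * |w s| := by
        rw [Finset.sum_comm]; simp [Finset.sum_mul]
    _ = l1norm w := by unfold l1norm; simp [θh.Ob_colsum j]

lemma Bop_mulVec' {S A O : ℕ} (θh : POMDPParams S A O) (j : ℕ) (a : Fin A) (o : Fin O)
    (v : Fin O → ℝ) :
    (θh.Bop j a o).mulVec v
      = (θh.Ob (j+1)).mulVec ((θh.T j a).mulVec
          (fun s => θh.Ob j o s * (pinvFC (θh.Ob j)).mulVec v s)) := by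
  unfold POMDPParams.Bop
  rw [← Matrix.mulVec_mulVec, ← Matrix.mulVec_mulVec, ← Matrix.mulVec_mulVec]
  have hdiag : (Matrix.diagonal (fun s => θh.Ob j o s)).mulVec ((pinvFC (θh.Ob j)).mulVec v)
      = fun s => θh.Ob j o s * (pinvFC (θh.Ob j)).mulVec v s :=
    funext fun s => Matrix.mulVec_diagonal _ _ _
  rw [hdiag]

lemma belief_succ_decomp {S A O h : ℕ} (θ θh : POMDPParams S A O)
    (τ : Traj A O (h+1)) :
    θ.belief (h+1) τ - θh.belief (h+1) τ
      = (θh.Bop (h+1) (τ (Fin.last h)).1 (τ (Fin.last h)).2).mulVec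
          (θ.belief h (fun i : Fin h => τ i.castSucc)
            - θh.belief h (fun i : Fin h => τ i.castSucc))
        + -((θh.Bop (h+1) (τ (Fin.last h)).1 (τ (Fin.last h)).2
              - θ.Bop (h+1) (τ (Fin.last h)).1 (τ (Fin.last h)).2).mulVec
            (θ.belief h (fun i : Fin h => τ i.castSucc))) := by
  simp only [POMDPParams.belief]
  rw [Matrix.mulVec_sub, Matrix.sub_mulVec]
  abel

lemma main_aux {S A O k : ℕ} (θ θh : POMDPParams S A O) (π : Policy A O) (h : ℕ)
    (X : Matrix (Fin k) (Fin O) ℝ)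
    (hX : ∀ (a : Fin A) (o : Fin O) (v : Fin O → ℝ),
      l1norm (X.mulVec ((θh.Bop (h+1) a o).mulVec v)) ≤
        l1norm ((θh.T (h+1) a).mulVec
          (fun s => θh.Ob (h+1) o s * (pinvFC (θh.Ob (h+1))).mulVec v s))) :
    ∑ τ ∈ GammaF π (h+1), l1norm (X.mulVec (θ.belief (h+1) τ - θh.belief (h+1) τ))
      ≤ (∑ τ ∈ GammaF π h,
          l1norm ((pinvFC (θh.Ob (h+1))).mulVec (θ.belief h τ - θh.belief h τ)))
        + ∑ τ ∈ GammaF π (h+1),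
            l1norm (X.mulVec ((θh.Bop (h+1) (τ (Fin.last h)).1 (τ (Fin.last h)).2
                - θ.Bop (h+1) (τ (Fin.last h)).1 (τ (Fin.last h)).2).mulVec
              (θ.belief h (fun i : Fin h => τ i.castSucc)))) := by
  have step1 :
      ∑ τ ∈ GammaF π (h+1), l1norm (X.mulVec (θ.belief (h+1) τ - θh.belief (h+1) τ))
        ≤ ∑ τ ∈ GammaF π (h+1),
            (l1norm (X.mulVec ((θh.Bop (h+1) (τ (Fin.last h)).1 (τ (Fin.last h)).2).mulVec
                (θ.belief h (fun i : Fin h => τ i.castSucc)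
                  - θh.belief h (fun i : Fin h => τ i.castSucc))))
              + l1norm (X.mulVec ((θh.Bop (h+1) (τ (Fin.last h)).1 (τ (Fin.last h)).2
                  - θ.Bop (h+1) (τ (Fin.last h)).1 (τ (Fin.last h)).2).mulVec
                (θ.belief h (fun i : Fin h => τ i.castSucc))))) := by
    refine Finset.sum_le_sum fun τ _ => ?_
    rw [belief_succ_decomp θ θh τ, Matrix.mulVec_add]
    refine (l1norm_add_le' _ _).trans ?_
    rw [Matrix.mulVec_neg, l1norm_neg']
  rw [Finset.sum_add_distrib] at step1
  refine step1.trans (add_le_add_left ?_ _)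
  rw [sum_gamma_succ π
    (fun τ => l1norm (X.mulVec ((θh.Bop (h+1) (τ (Fin.last h)).1 (τ (Fin.last h)).2).mulVec
      (θ.belief h (fun i : Fin h => τ i.castSucc)
        - θh.belief h (fun i : Fin h => τ i.castSucc)))))]
  refine Finset.sum_le_sum fun τ' _ => ?_
  simp only [Fin.snoc_last, snoc_prefix']
  calc ∑ o : Fin O, l1norm (X.mulVec ((θh.Bop (h+1) (π h τ' o) o).mulVec
          (θ.belief h τ' - θh.belief h τ')))
      ≤ ∑ o : Fin O, l1norm ((θh.T (h+1) (π h τ' o)).mulVec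
          (fun s => θh.Ob (h+1) o s *
            (pinvFC (θh.Ob (h+1))).mulVec (θ.belief h τ' - θh.belief h τ') s)) :=
        Finset.sum_le_sum fun o _ => hX _ _ _
    _ ≤ _ := sum_obs_bound θh (h+1) (fun o => π h τ' o) _

end Helpers
/-- belief-error induction step, Lemma belief-induction.
For each choice `X ∈ {I_O, 𝕆̂_{h+1}†}` (here trajectories have length `h+1`, so
the paper's `h` is our `h+1`; the two choices of `X` have different shapes, so
they are stated as the two conjuncts):
`Σ_{τ ∈ Γ(π,h+1)} ‖X (b(τ;θ) − b(τ;θ̂))‖₁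
 ≤ Σ_{τ ∈ Γ(π,h)} ‖𝕆̂_{h+1}† (b(τ;θ) − b(τ;θ̂))‖₁
 + Σ_{τ ∈ Γ(π,h+1)} ‖X (B̂_{h+1}(a,o) − B_{h+1}(a,o)) b(τ_prefix;θ)‖₁`. -/
theorem belief_error_induction {S A O : ℕ} (θ θh : POMDPParams S A O)
    (hfc : ∀ j : ℕ, pinvFC (θh.Ob j) * θh.Ob j = 1)
    (π : Policy A O) (h : ℕ) :
    (∑ τ ∈ GammaF π (h + 1),
        l1norm ((1 : Matrix (Fin O) (Fin O) ℝ).mulVec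
          (θ.belief (h + 1) τ - θh.belief (h + 1) τ))
      ≤ ∑ τ ∈ GammaF π h,
          l1norm ((pinvFC (θh.Ob (h + 1))).mulVec (θ.belief h τ - θh.belief h τ))
        + ∑ τ ∈ GammaF π (h + 1),
            l1norm ((1 : Matrix (Fin O) (Fin O) ℝ).mulVec
              ((θh.Bop (h + 1) (τ (Fin.last h)).1 (τ (Fin.last h)).2
                  - θ.Bop (h + 1) (τ (Fin.last h)).1 (τ (Fin.last h)).2).mulVec
                (θ.belief h (fun i : Fin h => τ i.castSucc)))))
    ∧ (∑ τ ∈ GammaF π (h + 1),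
        l1norm ((pinvFC (θh.Ob (h + 2))).mulVec
          (θ.belief (h + 1) τ - θh.belief (h + 1) τ))
      ≤ ∑ τ ∈ GammaF π h,
          l1norm ((pinvFC (θh.Ob (h + 1))).mulVec (θ.belief h τ - θh.belief h τ))
        + ∑ τ ∈ GammaF π (h + 1),
            l1norm ((pinvFC (θh.Ob (h + 2))).mulVec
              ((θh.Bop (h + 1) (τ (Fin.last h)).1 (τ (Fin.last h)).2
                  - θ.Bop (h + 1) (τ (Fin.last h)).1 (τ (Fin.last h)).2).mulVec
                (θ.belief h (fun i : Fin h => τ i.castSucc)))))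
    := by
  constructor
  · refine main_aux θ θh π h 1 ?_
    intro a o v
    rw [Matrix.one_mulVec, Bop_mulVec']
    exact l1norm_mulVec_colstoch _ (θh.Ob_nonneg (h+1+1)) (θh.Ob_colsum (h+1+1)) _
  · refine main_aux θ θh π h (pinvFC (θh.Ob (h+2))) ?_
    intro a o v
    rw [Bop_mulVec']
    rw [show h + 1 + 1 = h + 2 from rfl]
    rw [Matrix.mulVec_mulVec, hfc (h+2), Matrix.one_mulVec]
end

section
/- Let θ = (𝕋, 𝕆, μ₁) be a POMDP parameter triple such that every 𝕆_j has full column rank (𝕆_j^† 𝕆_j = I_S). Let π be a deterministic policy, fix an action a ∈ 𝒜, a vector u ∈ ℝ^O, and h ≥ 0. Then Σ_{o ∈ 𝒪} Σ_{τ_h ∈ Γ(π,h)} |u^⊤ b((a, o, τ_h); θ)| ≤ Σ_{s ∈ 𝒮} |u^⊤ (𝕆_{h+2} 𝕋_{h+1}(a))_s| · Pr^π_θ(s_{h+1} = s), where (𝕆_{h+2} 𝕋_{h+1}(a))_s denotes the s-th column of 𝕆_{h+2} 𝕋_{h+1}(a) and (a, o, τ_h) is the trajectory τ_h extended by observation o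 and action a at step h+1. -/
open Matrix BigOperators
open scoped Classical

noncomputable section

namespace POMDPParams
variable {S A O : ℕ}

lemma stateBelief_nonneg (θ : POMDPParams S A O) :
    ∀ (h : ℕ) (τ : Traj A O h) (s : Fin S), 0 ≤ θ.stateBelief h τ s := by
  intro h
  induction h with
  | zero => intro τ s; exact θ.mu1_nonneg s
  | succ h ih =>
    intro τ s
    simp only [stateBelief, Matrix.mulVec, dotProduct]
    refine Finset.sum_nonneg fun s' _ => mul_nonneg (θ.T_nonneg _ _ _ _)
      (mul_nonneg (θ.Ob_nonneg _ _ _) (ih _ s'))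

lemma belief_eq (θ : POMDPParams S A O)
    (hfc : ∀ j : ℕ, pinvFC (θ.Ob j) * θ.Ob j = 1) :
    ∀ (h : ℕ) (τ : Traj A O h),
      θ.belief h τ = (θ.Ob (h + 1)).mulVec (θ.stateBelief h τ) := by
  intro h
  induction h with
  | zero => intro τ; rfl
  | succ h ih =>
    intro τ
    have : θ.belief (h+1) τ
        = (θ.Bop (h+1) (τ (Fin.last h)).1 (τ (Fin.last h)).2).mulVec
          ((θ.Ob (h+1)).mulVec (θ.stateBelief h (fun i : Fin h => τ i.castSucc))) := by
      rw [belief, ih]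
    rw [this, Bop, Matrix.mulVec_mulVec, Matrix.mul_assoc, hfc (h+1), Matrix.mul_one]
    have hdiag : (Matrix.diagonal (fun s => θ.Ob (h+1) (τ (Fin.last h)).2 s)).mulVec
        (θ.stateBelief h (fun i : Fin h => τ i.castSucc))
        = fun s => θ.Ob (h+1) (τ (Fin.last h)).2 s *
            θ.stateBelief h (fun i : Fin h => τ i.castSucc) s := by
      funext s; simp [Matrix.mulVec_diagonal]
    rw [← Matrix.mulVec_mulVec, ← Matrix.mulVec_mulVec, hdiag]
    rfl

end POMDPParams

end
lemma my_sum_comm {ι κ : Type*} (s : Finset ι) (t : Finset κ) (f : ι → κ → ℝ) :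
    ∑ x ∈ s, ∑ y ∈ t, f x y = ∑ y ∈ t, ∑ x ∈ s, f x y := Finset.sum_comm

/-- Lemma: belief projections bounded by reweighted column
projections. -/
theorem belief_projection_le_visitation {S A O : ℕ} (θ : POMDPParams S A O)
    (hfc : ∀ j : ℕ, pinvFC (θ.Ob j) * θ.Ob j = 1)
    (π : Policy A O) (a : Fin A) (u : Fin O → ℝ) (h : ℕ) :
    ∑ o : Fin O, ∑ τ ∈ GammaF π h,
        |∑ i, u i * θ.belief (h + 1) (Fin.snoc τ (a, o)) i|
      ≤ ∑ s : Fin S,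

          |∑ i, u i * (θ.Ob (h + 2) * θ.T (h + 1) a) i s| * visitProb θ π (h + 1) s := by
  set c : Fin S → ℝ := fun s => ∑ i, u i * (θ.Ob (h + 2) * θ.T (h + 1) a) i s with hc
  have key : ∀ (o : Fin O) (τ : POMDPParams.Traj A O h),
      ∑ i, u i * θ.belief (h + 1) (Fin.snoc τ (a, o)) i
      = ∑ s, c s * (θ.Ob (h + 1) o s * θ.stateBelief h τ s) := by
    intro o τ
    have hsb : θ.stateBelief (h + 1) (Fin.snoc τ (a, o))
        = (θ.T (h + 1) a).mulVec
            (fun s => θ.Ob (h + 1) o s * θ.stateBelief h τ s) := by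
      simp [POMDPParams.stateBelief, Fin.snoc_last, Fin.snoc_castSucc]
    have hb := θ.belief_eq hfc (h + 1) (Fin.snoc τ (a, o))
    calc ∑ i, u i * θ.belief (h + 1) (Fin.snoc τ (a, o)) i
        = u ⬝ᵥ ((θ.Ob (h + 2) * θ.T (h + 1) a).mulVec
            (fun s => θ.Ob (h + 1) o s * θ.stateBelief h τ s)) := by
          rw [hb, hsb, Matrix.mulVec_mulVec]; rfl
      _ = ∑ s, c s * (θ.Ob (h + 1) o s * θ.stateBelief h τ s) := by
          rw [Matrix.dotProduct_mulVec]; rfl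
  calc ∑ o : Fin O, ∑ τ ∈ GammaF π h,
        |∑ i, u i * θ.belief (h + 1) (Fin.snoc τ (a, o)) i|
      ≤ ∑ o : Fin O, ∑ τ ∈ GammaF π h,
          ∑ s, |c s| * (θ.Ob (h + 1) o s * θ.stateBelief h τ s) := by
        refine Finset.sum_le_sum fun o _ => Finset.sum_le_sum fun τ _ => ?_
        rw [key o τ]
        refine (Finset.abs_sum_le_sum_abs _ _).trans (Finset.sum_le_sum fun s _ => ?_)
        rw [abs_mul, abs_of_nonneg (mul_nonneg (θ.Ob_nonneg _ _ _)
          (θ.stateBelief_nonneg h τ s))]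
    _ = ∑ s, ∑ o : Fin O, ∑ τ ∈ GammaF π h,
          |c s| * (θ.Ob (h + 1) o s * θ.stateBelief h τ s) := by
        have h1 : ∀ o : Fin O, ∑ τ ∈ GammaF π h, ∑ s : Fin S,
            |c s| * (θ.Ob (h + 1) o s * θ.stateBelief h τ s)
            = ∑ s : Fin S, ∑ τ ∈ GammaF π h,
                |c s| * (θ.Ob (h + 1) o s * θ.stateBelief h τ s) :=
          fun o => my_sum_comm _ _ _
        simp only [h1]
        exact my_sum_comm _ _ _
    _ = ∑ s, |c s| * ∑ τ ∈ GammaF π h, θ.stateBelief h τ s := by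
        refine Finset.sum_congr rfl fun s _ => ?_
        rw [my_sum_comm, Finset.mul_sum]
        refine Finset.sum_congr rfl fun τ _ => ?_
        rw [← Finset.mul_sum, ← Finset.sum_mul, θ.Ob_colsum (h + 1) s, one_mul]
    _ = ∑ s, |c s| * visitProb θ π (h + 1) s := by
        simp [visitProb]
end

section
/- Let C_z, C_w, C₀ ≥ 0 and let K ≥ 3 be an integer. Let z_k ∈ [0, C_z] and w_k ∈ [0, C_w] for k ∈ [K], and define S_k = Σ_{j=1}^{k} w_j with S₀ = 0. Suppose z_k · S_{k−1} ≤ C_z C_w C₀ √k for every k ∈ [K]. Then Σ_{k=1}^{K} z_k w_k ≤ 2 C_z C_w (C₀ + 1) √K · log K, where log denotes the natural logarithm. -/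
open Matrix BigOperators
open scoped Classical

/-- Telescoping sum over `Icc 1 K`. -/
lemma tel_sum_aux (f : ℕ → ℝ) (K : ℕ) :
    ∑ k ∈ Finset.Icc 1 K, (f k - f (k - 1)) = f K - f 0 := by
  induction K with
  | zero => simp
  | succ n ih =>
    rw [Finset.sum_Icc_succ_top (Nat.le_add_left 1 n), ih]
    simp only [Nat.add_sub_cancel]
    ring

set_option maxHeartbeats 1000000 in
private theorem root_regret_aux (Cz Cw C0 : ℝ) (hCz : 0 ≤ Cz) (hCw : 0 ≤ Cw) (hC0 : 0 ≤ C0)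
    (K : ℕ) (hK : 3 ≤ K) (z w : ℕ → ℝ)
    (hz : ∀ k ∈ Finset.Icc 1 K, z k ∈ Set.Icc 0 Cz)
    (hw : ∀ k ∈ Finset.Icc 1 K, w k ∈ Set.Icc 0 Cw)
    (hmain : ∀ k ∈ Finset.Icc 1 K,
      z k * (∑ j ∈ Finset.Icc 1 (k - 1), w j) ≤ Cz * Cw * C0 * Real.sqrt k) :
    ∑ k ∈ Finset.Icc 1 K, z k * w k
      ≤ 2 * Cz * Cw * (C0 + 1) * Real.sqrt K * Real.log K := by
  classical
  have hK1 : (1:ℝ) ≤ K := by exact_mod_cast (by omega : 1 ≤ K)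
  have hKpos : (0:ℝ) < K := by linarith
  have hsqrtK : (1:ℝ) ≤ Real.sqrt K := by
    rw [show (1:ℝ) = Real.sqrt 1 by simp]
    exact Real.sqrt_le_sqrt hK1
  have hlogK : (1:ℝ) ≤ Real.log K := by
    rw [Real.le_log_iff_exp_le hKpos]
    have h3 : (3:ℝ) ≤ K := by exact_mod_cast hK
    have := Real.exp_one_lt_d9
    linarith
  -- degenerate case Cw = 0
  rcases eq_or_lt_of_le hCw with hCw0 | hCwpos
  · have hzero : ∑ k ∈ Finset.Icc 1 K, z k * w k = 0 := by
      apply Finset.sum_eq_zero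
      intro k hk
      have h1 := (hw k hk).1
      have h2 := (hw k hk).2
      have : w k = 0 := le_antisymm (by linarith [hCw0]) h1
      rw [this, mul_zero]
    rw [hzero, ← hCw0]
    ring_nf
    positivity
  -- main case
  set S : ℕ → ℝ := fun k => ∑ j ∈ Finset.Icc 1 k, w j with hS
  set g : ℕ → ℝ := fun k => min (S k) (2 * Cw) with hg
  set h : ℕ → ℝ := fun k => Real.log (max (S k) Cw) with hh
  set M : ℝ := Cz * Cw * C0 with hM
  have hMnn : 0 ≤ M := by positivity
  set C1 : ℝ := 2 * M * Real.sqrt K with hC1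
  have hC1nn : 0 ≤ C1 := by positivity
  have hS0 : S 0 = 0 := by simp [hS]
  have hSnn : ∀ k, k ≤ K → 0 ≤ S k := by
    intro k hkK
    apply Finset.sum_nonneg
    intro j hj
    rw [Finset.mem_Icc] at hj
    exact (hw j (Finset.mem_Icc.mpr ⟨hj.1, hj.2.trans hkK⟩)).1
  have key : ∀ k ∈ Finset.Icc 1 K,
      z k * w k ≤ Cz * (g k - g (k - 1)) + C1 * (h k - h (k - 1)) := by
    intro k hk
    rw [Finset.mem_Icc] at hk
    obtain ⟨n, rfl⟩ : ∃ n, k = n + 1 := ⟨k - 1, (Nat.succ_pred_eq_of_pos hk.1).symm⟩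
    have hk2 : n + 1 ≤ K := hk.2
    have hnK : n ≤ K := by omega
    have hmem : n + 1 ∈ Finset.Icc 1 K := Finset.mem_Icc.mpr ⟨by omega, hk2⟩
    have hw1 := (hw _ hmem).1
    have hw2 := (hw _ hmem).2
    have hz1 := (hz _ hmem).1
    have hz2 := (hz _ hmem).2
    have hSn : 0 ≤ S n := hSnn n hnK
    have hstep : S (n + 1) = S n + w (n + 1) := by
      simp only [hS]
      rw [Finset.sum_Icc_succ_top (Nat.le_add_left 1 n)]
    have hred : n + 1 - 1 = n := by omega
    rw [hred]
    by_cases hcase : S n ≤ Cw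
    · -- small prefix case
      have hg_n : g n = S n := min_eq_left (by linarith)
      have hg_n1 : g (n + 1) = S (n + 1) := min_eq_left (by rw [hstep]; linarith)
      have hhmono : h n ≤ h (n + 1) := by
        apply Real.log_le_log (by positivity)
        exact max_le_max (by linarith [hstep]) le_rfl
      have : z (n+1) * w (n+1) ≤ Cz * w (n+1) :=
        mul_le_mul_of_nonneg_right hz2 hw1
      have hgd : g (n+1) - g n = w (n+1) := by rw [hg_n, hg_n1, hstep]; ring
      nlinarith [mul_le_mul_of_nonneg_left hhmono hC1nn]
    · -- large prefix case
      push_neg at hcase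
      have hSnpos : 0 < S n := lt_trans hCwpos hcase
      have hS1pos : 0 < S (n + 1) := by rw [hstep]; linarith
      have hgmono : g n ≤ g (n + 1) := by
        exact min_le_min (by rw [hstep]; linarith) le_rfl
      have hh_n : h n = Real.log (S n) := by
        simp only [hh]; rw [max_eq_left (le_of_lt hcase)]
      have hh_n1 : h (n+1) = Real.log (S (n+1)) := by
        simp only [hh]; rw [max_eq_left (by rw [hstep]; linarith)]
      -- log inequality : w/(S(n+1)) ≤ log S(n+1) - log S n
      have hlog : w (n+1) / S (n+1) ≤ Real.log (S (n+1)) - Real.log (S n) := by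
        have h1 : Real.log (S n / S (n+1)) ≤ S n / S (n+1) - 1 :=
          Real.log_le_sub_one_of_pos (by positivity)
        rw [Real.log_div (ne_of_gt hSnpos) (ne_of_gt hS1pos)] at h1
        have h2 : S n / S (n+1) - 1 = -(w (n+1) / S (n+1)) := by
          field_simp
          rw [hstep]; ring
        rw [h2] at h1
        linarith
      have hd : w (n+1) ≤ (Real.log (S (n+1)) - Real.log (S n)) * S (n+1) := by
        rw [← div_le_iff₀ hS1pos] at *
        exact hlog
      set d : ℝ := Real.log (S (n+1)) - Real.log (S n) with hdd
      have hdnn : 0 ≤ d := by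
        have : 0 ≤ w (n+1) / S (n+1) := by positivity
        linarith
      have hmain' := hmain (n+1) hmem
      rw [hred] at hmain'
      have hsqle : Real.sqrt (n+1) ≤ Real.sqrt K := by
        apply Real.sqrt_le_sqrt
        exact_mod_cast hk2
      have h3 : z (n+1) * S n ≤ M * Real.sqrt K := by
        calc z (n+1) * S n ≤ M * Real.sqrt (n+1) := by exact_mod_cast hmain'
        _ ≤ M * Real.sqrt K := mul_le_mul_of_nonneg_left hsqle hMnn
      have hS1le : S (n+1) ≤ 2 * S n := by rw [hstep]; linarith
      have e1 : z (n+1) * w (n+1) * S n ≤ M * Real.sqrt K * w (n+1) := by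
        nlinarith
      have e2 : M * Real.sqrt K * w (n+1) ≤ M * Real.sqrt K * (d * S (n+1)) :=
        mul_le_mul_of_nonneg_left hd (by positivity)
      have e3 : M * Real.sqrt K * (d * S (n+1)) ≤ M * Real.sqrt K * (d * (2 * S n)) := by
        apply mul_le_mul_of_nonneg_left _ (by positivity)
        exact mul_le_mul_of_nonneg_left hS1le hdnn
      have e4 : z (n+1) * w (n+1) * S n ≤ (C1 * d) * S n := by
        calc z (n+1) * w (n+1) * S n ≤ M * Real.sqrt K * (d * (2 * S n)) := by linarith
        _ = (C1 * d) * S n := by rw [hC1]; ring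
      have e5 : z (n+1) * w (n+1) ≤ C1 * d := by
        exact le_of_mul_le_mul_right e4 hSnpos
      have e6 : 0 ≤ Cz * (g (n+1) - g n) := by
        apply mul_nonneg hCz; linarith
      rw [hh_n, hh_n1, ← hdd]
      linarith
  have sum_le : ∑ k ∈ Finset.Icc 1 K, z k * w k
      ≤ ∑ k ∈ Finset.Icc 1 K, (Cz * (g k - g (k-1)) + C1 * (h k - h (k-1))) :=
    Finset.sum_le_sum key
  have hsplit : ∑ k ∈ Finset.Icc 1 K, (Cz * (g k - g (k-1)) + C1 * (h k - h (k-1)))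
      = Cz * (g K - g 0) + C1 * (h K - h 0) := by
    rw [Finset.sum_add_distrib, ← Finset.mul_sum, ← Finset.mul_sum,
      tel_sum_aux g K, tel_sum_aux h K]
  -- bounds on endpoints
  have hg0 : g 0 = 0 := by
    have h2Cw : (0:ℝ) ≤ 2 * Cw := by linarith
    simp [hg, hS0, min_eq_left h2Cw]
  have hgK : g K ≤ 2 * Cw := min_le_right _ _
  have hSK : S K ≤ K * Cw := by
    calc S K ≤ ∑ j ∈ Finset.Icc 1 K, Cw := Finset.sum_le_sum (fun j hj => (hw j hj).2)
    _ = K * Cw := by rw [Finset.sum_const, Nat.card_Icc]; simp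
  have hh0 : h 0 = Real.log Cw := by simp [hh, hS0, max_eq_right (le_of_lt hCwpos)]
  have hhK : h K ≤ Real.log (K * Cw) := by
    apply Real.log_le_log (by positivity)
    apply max_le (le_trans hSK le_rfl)
    have : (1:ℝ) * Cw ≤ K * Cw := mul_le_mul_of_nonneg_right hK1 (le_of_lt hCwpos)
    linarith
  have hlogdiff : Real.log ((K:ℝ) * Cw) - Real.log Cw = Real.log K := by
    rw [Real.log_mul (ne_of_gt hKpos) (ne_of_gt hCwpos)]; ring
  have final1 : ∑ k ∈ Finset.Icc 1 K, z k * w k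
      ≤ Cz * (2 * Cw) + C1 * Real.log K := by
    rw [hsplit] at sum_le
    have t1 : Cz * (g K - g 0) ≤ Cz * (2 * Cw) := by
      apply mul_le_mul_of_nonneg_left _ hCz
      rw [hg0]; linarith
    have t2 : C1 * (h K - h 0) ≤ C1 * Real.log K := by
      apply mul_le_mul_of_nonneg_left _ hC1nn
      rw [hh0]
      linarith [hhK, hlogdiff]
    linarith
  have hfinal2 : Cz * (2 * Cw) ≤ 2 * Cz * Cw * (Real.sqrt K * Real.log K) := by
    have h1 : (1:ℝ) ≤ Real.sqrt K * Real.log K := by nlinarith [hsqrtK, hlogK]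
    have h2 : 0 ≤ 2 * Cz * Cw := by positivity
    nlinarith [mul_le_mul_of_nonneg_left h1 h2]
  calc ∑ k ∈ Finset.Icc 1 K, z k * w k ≤ Cz * (2 * Cw) + C1 * Real.log K := final1
  _ ≤ 2 * Cz * Cw * (Real.sqrt K * Real.log K) + C1 * Real.log K := by linarith
  _ = 2 * Cz * Cw * (C0 + 1) * Real.sqrt K * Real.log K := by rw [hC1, hM]; ring

/-- Lemma `root-regret`: a purely algebraic regret bound. -/
theorem root_regret (Cz Cw C0 : ℝ) (hCz : 0 ≤ Cz) (hCw : 0 ≤ Cw) (hC0 : 0 ≤ C0)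
    (K : ℕ) (hK : 3 ≤ K) (z w : ℕ → ℝ)
    (hz : ∀ k ∈ Finset.Icc 1 K, z k ∈ Set.Icc 0 Cz)
    (hw : ∀ k ∈ Finset.Icc 1 K, w k ∈ Set.Icc 0 Cw)
    (hmain : ∀ k ∈ Finset.Icc 1 K,
      z k * (∑ j ∈ Finset.Icc 1 (k - 1), w j) ≤ Cz * Cw * C0 * Real.sqrt k) :
    ∑ k ∈ Finset.Icc 1 K, z k * w k
      ≤ 2 * Cz * Cw * (C0 + 1) * Real.sqrt K * Real.log K := by
  exact root_regret_aux Cz Cw C0 hCz hCw hC0 K hK z w hz hw hmain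
end

section
/- Let S ≤ O, let 𝕆_h, 𝕆_{h+1} ∈ ℝ^{O×S} be matrices whose columns are probability vectors, with σ_min(𝕆_h) ≥ α > 0, and let 𝕋 ∈ ℝ^{S×S} be column-stochastic (nonnegative, columns summing to 1). Then for every o ∈ 𝒪, the operator B = 𝕆_{h+1} 𝕋 diag(𝕆_h(o|·)) 𝕆_h^† ∈ ℝ^{O×O} satisfies ‖B‖₂ ≤ √S / α, where ‖·‖₂ is the spectral norm, 𝕆_h^† the Moore–Penrose pseudoinverse, and 𝕆_h(o|·) the o-th row of 𝕆_h. -/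
open Matrix BigOperators
open scoped Classical

section AuxLemmas

open Finset

lemma l2norm_nonneg' {n : ℕ} (v : Fin n → ℝ) : 0 ≤ l2norm v := Real.sqrt_nonneg _

lemma l2norm_sq' {n : ℕ} (v : Fin n → ℝ) : l2norm v ^ 2 = ∑ i, v i ^ 2 := by
  unfold l2norm
  rw [Real.sq_sqrt (by positivity)]

lemma l2norm_eq_zero' {n : ℕ} {v : Fin n → ℝ} (h : l2norm v = 0) : v = 0 := by
  have h2 : ∑ i, v i ^ 2 = 0 := by
    rw [← l2norm_sq', h]; ring
  funext i
  have := (Finset.sum_eq_zero_iff_of_nonneg (fun i _ => sq_nonneg (v i))).mp h2 i (mem_univ i)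
  exact (pow_eq_zero_iff two_ne_zero).mp this

lemma l2norm_smul' {n : ℕ} (c : ℝ) (v : Fin n → ℝ) :
    l2norm (fun i => c * v i) = |c| * l2norm v := by
  unfold l2norm
  rw [← Real.sqrt_sq_eq_abs, ← Real.sqrt_mul (sq_nonneg c), Finset.mul_sum]
  congr 1
  refine Finset.sum_congr rfl fun i _ => by ring

lemma dotProduct_le_l2 {n : ℕ} (v w : Fin n → ℝ) : v ⬝ᵥ w ≤ l2norm v * l2norm w := by
  simpa [l2norm, dotProduct] using Real.sum_mul_le_sqrt_mul_sqrt Finset.univ v w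

/-- `α ‖v‖ ≤ ‖Mv‖` when `α ≤ σ_min(M)`. -/
lemma sigmaMin_mulVec_lb {S O : ℕ} {α : ℝ} (hα : 0 < α) {M : Matrix (Fin O) (Fin S) ℝ}
    (hσ : α ≤ sigmaMin M) (v : Fin S → ℝ) :
    α * l2norm v ≤ l2norm (M.mulVec v) := by
  by_cases hv : l2norm v = 0
  · rw [hv, mul_zero]; exact l2norm_nonneg' _
  have hvpos : 0 < l2norm v := lt_of_le_of_ne (l2norm_nonneg' v) (Ne.symm hv)
  set c : ℝ := l2norm v with hc
  have hu : l2norm (fun i => c⁻¹ * v i) = 1 := by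
    rw [l2norm_smul', abs_of_pos (inv_pos.mpr hvpos), inv_mul_cancel₀ hv]
  have hmem : l2norm (M.mulVec (fun i => c⁻¹ * v i)) ∈
      {r : ℝ | ∃ x : Fin S → ℝ, l2norm x = 1 ∧ r = l2norm (M.mulVec x)} :=
    ⟨_, hu, rfl⟩
  have hbdd : BddBelow {r : ℝ | ∃ x : Fin S → ℝ, l2norm x = 1 ∧ r = l2norm (M.mulVec x)} :=
    ⟨0, fun r ⟨x, _, hr⟩ => hr ▸ l2norm_nonneg' _⟩
  have hle : α ≤ l2norm (M.mulVec (fun i => c⁻¹ * v i)) :=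
    le_trans hσ (csInf_le hbdd hmem)
  have hscale : M.mulVec (fun i => c⁻¹ * v i) = fun o => c⁻¹ * (M.mulVec v) o := by
    funext o
    simp only [Matrix.mulVec, dotProduct, Finset.mul_sum]
    refine Finset.sum_congr rfl fun s _ => by ring
  rw [hscale, l2norm_smul', abs_of_pos (inv_pos.mpr hvpos)] at hle
  have := mul_le_mul_of_nonneg_left hle (le_of_lt hvpos)
  calc α * l2norm v = c * α := by rw [mul_comm]
    _ ≤ c * (c⁻¹ * l2norm (M.mulVec v)) := this
    _ = l2norm (M.mulVec v) := by field_simp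

lemma dot_transpose_mulVec {S O : ℕ} (M : Matrix (Fin O) (Fin S) ℝ)
    (v : Fin S → ℝ) (w : Fin O → ℝ) :
    v ⬝ᵥ (Mᵀ.mulVec w) = (M.mulVec v) ⬝ᵥ w := by
  rw [Matrix.dotProduct_mulVec, Matrix.vecMul_transpose]

lemma dot_self_eq_l2sq {n : ℕ} (v : Fin n → ℝ) : v ⬝ᵥ v = l2norm v ^ 2 := by
  rw [l2norm_sq']
  refine Finset.sum_congr rfl fun i _ => (sq (v i)).symm

/-- Invertibility of the Gram matrix `Mᵀ M`. -/
lemma gram_isUnit {S O : ℕ} {α : ℝ} (hα : 0 < α) {M : Matrix (Fin O) (Fin S) ℝ}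
    (hσ : α ≤ sigmaMin M) : IsUnit (Mᵀ * M) := by
  rw [← Matrix.mulVec_injective_iff_isUnit]
  intro a b hab
  have hd : (Mᵀ * M).mulVec (a - b) = 0 := by
    rw [Matrix.mulVec_sub, hab, sub_self]
  have h0 : (M.mulVec (a - b)) ⬝ᵥ (M.mulVec (a - b)) = 0 := by
    rw [← dot_transpose_mulVec, Matrix.mulVec_mulVec, hd, dotProduct_zero]
  rw [dot_self_eq_l2sq] at h0
  have h1 : l2norm (M.mulVec (a - b)) = 0 := by
    have := l2norm_nonneg' (M.mulVec (a - b))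
    nlinarith
  have h2 : α * l2norm (a - b) ≤ 0 := h1 ▸ sigmaMin_mulVec_lb hα hσ (a - b)
  have h3 : l2norm (a - b) = 0 := by
    have h4 := l2norm_nonneg' (a - b)
    nlinarith
  have := l2norm_eq_zero' h3
  exact sub_eq_zero.mp this

/-- `α ‖M† x‖ ≤ ‖x‖` when `α ≤ σ_min(M)`. -/
lemma pinv_l2_bound {S O : ℕ} {α : ℝ} (hα : 0 < α) {M : Matrix (Fin O) (Fin S) ℝ}
    (hσ : α ≤ sigmaMin M) (x : Fin O → ℝ) :
    α * l2norm ((pinvFC M).mulVec x) ≤ l2norm x := by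
  set v : Fin S → ℝ := (pinvFC M).mulVec x with hv
  set w : Fin O → ℝ := M.mulVec v with hw
  have hunit := gram_isUnit hα hσ
  have hdet : IsUnit (Mᵀ * M).det := (Matrix.isUnit_iff_isUnit_det _).mp hunit
  have hstep : (Mᵀ * M).mulVec v = Mᵀ.mulVec x := by
    rw [hv]
    unfold pinvFC
    rw [← Matrix.mulVec_mulVec, Matrix.mulVec_mulVec, Matrix.mulVec_mulVec,
      ← Matrix.mul_assoc, Matrix.mul_nonsing_inv _ hdet, Matrix.one_mul]
  have hkey : l2norm w ^ 2 ≤ l2norm w * l2norm x := by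
    calc l2norm w ^ 2 = w ⬝ᵥ w := (dot_self_eq_l2sq w).symm
      _ = v ⬝ᵥ (Mᵀ.mulVec w) := (dot_transpose_mulVec M v w).symm
      _ = v ⬝ᵥ ((Mᵀ * M).mulVec v) := by rw [hw, Matrix.mulVec_mulVec]
      _ = v ⬝ᵥ (Mᵀ.mulVec x) := by rw [hstep]
      _ = w ⬝ᵥ x := dot_transpose_mulVec M v x
      _ ≤ l2norm w * l2norm x := dotProduct_le_l2 w x
  have hwx : l2norm w ≤ l2norm x := by
    rcases eq_or_lt_of_le (l2norm_nonneg' w) with h0 | h0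
    · rw [← h0]; exact l2norm_nonneg' x
    · nlinarith
  calc α * l2norm v ≤ l2norm w := sigmaMin_mulVec_lb hα hσ v
    _ ≤ l2norm x := hwx

lemma l2_le_l1 {n : ℕ} (v : Fin n → ℝ) : l2norm v ≤ l1norm v := by
  unfold l2norm l1norm
  have h1 : ∑ i, v i ^ 2 ≤ (∑ i, |v i|) ^ 2 := by
    have := Finset.sum_sq_le_sq_sum_of_nonneg (s := Finset.univ)
      (f := fun i => |v i|) (fun i _ => abs_nonneg (v i))
    simpa [sq_abs] using this
  calc Real.sqrt (∑ i, v i ^ 2) ≤ Real.sqrt ((∑ i, |v i|) ^ 2) := Real.sqrt_le_sqrt h1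
    _ = ∑ i, |v i| := Real.sqrt_sq (Finset.sum_nonneg fun i _ => abs_nonneg (v i))

lemma l1_le_sqrt_l2 {n : ℕ} (v : Fin n → ℝ) : l1norm v ≤ Real.sqrt n * l2norm v := by
  unfold l1norm l2norm
  have := Real.sum_mul_le_sqrt_mul_sqrt Finset.univ (fun i => |v i|) (fun _ => (1 : ℝ))
  simp only [mul_one, one_pow, sq_abs, Finset.sum_const, Finset.card_univ,
    Fintype.card_fin, nsmul_eq_mul] at this
  calc ∑ i, |v i| ≤ Real.sqrt (∑ i, v i ^ 2) * Real.sqrt n := by simpa using this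
    _ = Real.sqrt n * Real.sqrt (∑ i, v i ^ 2) := mul_comm _ _

lemma l1_mulVec_le {S O : ℕ} (N : Matrix (Fin O) (Fin S) ℝ)
    (hN : ∀ s, ∑ o, |N o s| ≤ 1) (v : Fin S → ℝ) :
    l1norm (N.mulVec v) ≤ l1norm v := by
  unfold l1norm
  calc ∑ o, |(N.mulVec v) o| ≤ ∑ o, ∑ s, |N o s * v s| := by
        refine Finset.sum_le_sum fun o _ => ?_
        rw [show (N.mulVec v) o = ∑ s, N o s * v s from rfl]
        exact Finset.abs_sum_le_sum_abs _ _
    _ = ∑ s, |v s| * ∑ o, |N o s| := by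
        rw [Finset.sum_comm]
        refine Finset.sum_congr rfl fun s _ => by
          rw [Finset.mul_sum]
          refine Finset.sum_congr rfl fun o _ => by rw [abs_mul]; ring
    _ ≤ ∑ s, |v s| * 1 := Finset.sum_le_sum fun s _ =>
        mul_le_mul_of_nonneg_left (hN s) (abs_nonneg _)
    _ = ∑ s, |v s| := by simp

end AuxLemmas

/-- Spectral-norm bound on an observable operator of an
undercomplete POMDP: `‖𝕆_{h+1} 𝕋 diag(𝕆_h(o|·)) 𝕆_h†‖₂ ≤ √S / α`, stated as
the equivalent bound `‖B x‖₂ ≤ (√S/α) ‖x‖₂` for all `x`. -/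
theorem operator_spectral_norm_bound {S O : ℕ} (hSO : S ≤ O)
    (α : ℝ) (hα : 0 < α)
    (Obh Obh1 : Matrix (Fin O) (Fin S) ℝ)
    (hObh0 : ∀ o s, 0 ≤ Obh o s) (hObh1 : ∀ s, ∑ o, Obh o s = 1)
    (hObh10 : ∀ o s, 0 ≤ Obh1 o s) (hObh11 : ∀ s, ∑ o, Obh1 o s = 1)
    (hσ : α ≤ sigmaMin Obh)
    (T : Matrix (Fin S) (Fin S) ℝ)
    (hT0 : ∀ s' s, 0 ≤ T s' s) (hT1 : ∀ s, ∑ s', T s' s = 1)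
    (o : Fin O) (x : Fin O → ℝ) :
    l2norm ((Obh1 * T * Matrix.diagonal (fun s => Obh o s) * pinvFC Obh).mulVec x)
      ≤ Real.sqrt S / α * l2norm x := by
  set M2 : Matrix (Fin O) (Fin S) ℝ := Obh1 * T * Matrix.diagonal (fun s => Obh o s) with hM2
  set v : Fin S → ℝ := (pinvFC Obh).mulVec x with hv
  have hsplit : (Obh1 * T * Matrix.diagonal (fun s => Obh o s) * pinvFC Obh).mulVec x
      = M2.mulVec v := by
    rw [hv, Matrix.mulVec_mulVec, hM2]
  -- entries of M2
  have hM2app : ∀ o' s, M2 o' s = (Obh1 * T) o' s * Obh o s := by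
    intro o' s
    rw [hM2, Matrix.mul_diagonal]
  have hOT0 : ∀ o' s, 0 ≤ (Obh1 * T) o' s := by
    intro o' s
    rw [Matrix.mul_apply]
    exact Finset.sum_nonneg fun s' _ => mul_nonneg (hObh10 o' s') (hT0 s' s)
  -- column ℓ¹ norms of M2 are ≤ 1
  have hcol : ∀ s, ∑ o', |M2 o' s| ≤ 1 := by
    intro s
    have habs : ∀ o', |M2 o' s| = (Obh1 * T) o' s * Obh o s := by
      intro o'
      rw [hM2app]
      exact abs_of_nonneg (mul_nonneg (hOT0 o' s) (hObh0 o s))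
    have hsum : ∑ o', (Obh1 * T) o' s = 1 := by
      simp only [Matrix.mul_apply]
      rw [Finset.sum_comm]
      calc ∑ s', ∑ o', Obh1 o' s' * T s' s
          = ∑ s', (∑ o', Obh1 o' s') * T s' s := by
            refine Finset.sum_congr rfl fun s' _ => (Finset.sum_mul _ _ _).symm
        _ = ∑ s', T s' s := by
            refine Finset.sum_congr rfl fun s' _ => by rw [hObh11 s', one_mul]
        _ = 1 := hT1 s
    have hObole : Obh o s ≤ 1 := by
      calc Obh o s ≤ ∑ o', Obh o' s :=
            Finset.single_le_sum (fun o' _ => hObh0 o' s) (Finset.mem_univ o)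
        _ = 1 := hObh1 s
    calc ∑ o', |M2 o' s| = ∑ o', (Obh1 * T) o' s * Obh o s :=
          Finset.sum_congr rfl fun o' _ => habs o'
      _ = (∑ o', (Obh1 * T) o' s) * Obh o s := (Finset.sum_mul _ _ _).symm
      _ = Obh o s := by rw [hsum, one_mul]
      _ ≤ 1 := hObole
  -- the pseudoinverse bound
  have hpinv : α * l2norm v ≤ l2norm x := pinv_l2_bound hα hσ x
  have hvle : l2norm v ≤ l2norm x / α := by
    rw [le_div_iff₀ hα, mul_comm]; exact hpinv
  have hsqrtS : (0 : ℝ) ≤ Real.sqrt S := Real.sqrt_nonneg _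
  calc l2norm ((Obh1 * T * Matrix.diagonal (fun s => Obh o s) * pinvFC Obh).mulVec x)
      = l2norm (M2.mulVec v) := by rw [hsplit]
    _ ≤ l1norm (M2.mulVec v) := l2_le_l1 _
    _ ≤ l1norm v := l1_mulVec_le M2 hcol v
    _ ≤ Real.sqrt S * l2norm v := l1_le_sqrt_l2 v
    _ ≤ Real.sqrt S * (l2norm x / α) := mul_le_mul_of_nonneg_left hvle hsqrtS
    _ = Real.sqrt S / α * l2norm x := by ring
end
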